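/- arXiv:2412.01612 — 2 statements merged into one kernel-verified Lean document; each statement's English description precedes it below -/
import Mathlib

section
/- Let F be an algebraically closed field of characteristic zero, G a finite abelian group with n := |G|, and m ≥ 1. Let W : G → M_m(F) be a family of m×m matrices satisfying (W(g))ᵀ = W(g⁻¹) for every g ∈ G. Let D be the m×m diagonal matrix whose (i,i)-entry is the i-th row sum of Σ_{g∈G} W(g), set L_X := D − Σ_{g∈G} W(g), and let L_Y be the (mn)×(mn) matrix with rows and columns indexed by pairs (i,g) ∈ {1,…,m}×G whose ((i,g),(j,h))-entry equals δ_{g,h}·D_{ij} − (W(g⁻¹h))_{ij}. For a character ψ : G → Fˣ set h(ψ) := det(D − Σ_{g∈G} ψ(g)·W(g)). Then n · det(L_Y with the row and the column indexed by (1, 1_G) deleted) = det(L_X with the first row and first column deleted) · ∏_{ψ ≠ 1} h(ψ), where the product runs over all nontrivial characters ψ : G → Fˣ. -/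
open Matrix

section AuxLemmas

private lemma det_eq_submatrix_of_row_single {R : Type*} [CommRing R] {ι : Type*} [Fintype ι]
    [DecidableEq ι] (M : Matrix ι ι R) (k : ι)
    (h0 : ∀ c, c ≠ k → M k c = 0) (h1 : M k k = 1) :
    M.det = (M.submatrix (fun x : {z : ι // z ≠ k} => x.val)
      (fun x : {z : ι // z ≠ k} => x.val)).det := by
  classical
  let e : {z : ι // z ≠ k} ⊕ {z : ι // ¬ z ≠ k} ≃ ι := Equiv.sumCompl _
  haveI : Unique {z : ι // ¬ z ≠ k} :=
    ⟨⟨⟨k, by simp⟩⟩, fun x => Subtype.ext (not_ne_iff.mp x.2)⟩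
  rw [← Matrix.det_submatrix_equiv_self e M]
  have hM : M.submatrix e e = Matrix.fromBlocks
      (M.submatrix (fun x : {z : ι // z ≠ k} => x.val) (fun x : {z : ι // z ≠ k} => x.val))
      (Matrix.of fun (x : {z : ι // z ≠ k}) (y : {z : ι // ¬ z ≠ k}) => M x.val y.val)
      0 1 := by
    ext x y
    have hval : ∀ y : {z : ι // ¬ z ≠ k}, (y : ι) = k := fun y => not_ne_iff.mp y.2
    cases x with
    | inl i =>
      cases y with
      | inl j => simp [e]
      | inr j => simp [e]
    | inr i =>
      cases y with
      | inl j =>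
        simp [e, hval i, h0 j.val j.2]
      | inr j =>
        have : i = j := Subsingleton.elim _ _
        simp [e, hval i, hval j, h1, this, Matrix.one_apply]
  rw [hM, Matrix.det_fromBlocks_zero₂₁]
  simp

private lemma det_add_const_eq {F : Type*} [Field F] {ι : Type*} [Fintype ι] [DecidableEq ι]
    (A : Matrix ι ι F) (k : ι) (t : F)
    (hr : ∀ i, ∑ j, A i j = 0) (hc : ∀ j, ∑ i, A i j = 0)
    (hN : (Fintype.card ι : F) ≠ 0) :
    (A + Matrix.of fun _ _ => t).det
      = t * (Fintype.card ι : F) ^ 2 *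
        (A.submatrix (fun x : {z : ι // z ≠ k} => x.val)
          (fun x : {z : ι // z ≠ k} => x.val)).det := by
  classical
  set N : F := (Fintype.card ι : F) with hNdef
  set M : Matrix ι ι F := A + Matrix.of fun _ _ => t with hMdef
  -- Step 1 : replace column k by the sum of all columns (all row sums are t*N)
  have hMrow : ∀ i, (∑ c, M i c) = t * N := by
    intro i
    simp only [hMdef, Matrix.add_apply, Matrix.of_apply, Finset.sum_add_distrib, hr i,
      Finset.sum_const, zero_add, nsmul_eq_mul, hNdef, Finset.card_univ]
    ring
  have h1 : (M.updateCol k (fun r => ∑ c, M r c)).det = M.det := by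
    have := Matrix.det_updateCol_sum M k (fun _ => (1 : F))
    simpa using this
  set C : Matrix ι ι F := A.updateCol k (fun _ => t * N) with hCdef
  have hB : M.updateCol k (fun r => ∑ c, M r c) = M.updateCol k (fun _ => t * N) := by
    rw [show (fun r => ∑ c, M r c) = (fun _ : ι => t * N) from funext hMrow]
  -- Step 2 : B = C * T with det T = 1
  set u : ι → F := Pi.single k 1 with hu
  set v : ι → F := fun c => if c = k then 0 else N⁻¹ with hv
  set T : Matrix ι ι F := 1 + Matrix.replicateCol Unit u * Matrix.replicateRow Unit v with hT
  have hTapp : ∀ c' c, T c' c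
      = (if c' = c then 1 else 0) + (if c' = k then 1 else 0) * (if c = k then 0 else N⁻¹) := by
    intro c' c
    simp [hT, Matrix.add_apply, Matrix.one_apply, Matrix.mul_apply, hu, hv,
      Pi.single_apply]
  have hdetT : T.det = 1 := by
    rw [hT, Matrix.det_one_add_replicateCol_mul_replicateRow]
    simp [hu, hv, dotProduct, Pi.single_apply]
  have hCapp : ∀ i c, C i c = if c = k then t * N else A i c := by
    intro i c
    simp [hCdef, Matrix.updateCol_apply]
  have hBCT : M.updateCol k (fun _ => t * N) = C * T := by
    ext i c
    rw [Matrix.mul_apply]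
    have expand : ∀ c', C i c' * T c' c
        = (if c' = c then C i c' else 0)
          + (if c' = k then C i c' * (if c = k then 0 else N⁻¹) else 0) := by
      intro c'
      rw [hTapp]
      split_ifs <;> ring
    rw [Finset.sum_congr rfl (fun c' _ => expand c')]
    rw [Finset.sum_add_distrib, Finset.sum_ite_eq' Finset.univ c (fun c' => C i c'),
      Finset.sum_ite_eq' Finset.univ k (fun c' => C i c' * (if c = k then 0 else N⁻¹))]
    simp only [Finset.mem_univ, if_true]
    rw [Matrix.updateCol_apply, hCapp i c, hCapp i k]
    by_cases hck : c = k
    · simp [hck]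
    · simp only [hck, if_false, if_true]
      rw [hMdef]
      simp only [Matrix.add_apply, Matrix.of_apply]
      field_simp
  -- Step 3 : replace row k of C by sum of all rows
  have h3 : (C.updateRow k (∑ i, C i)).det = C.det := by
    have := Matrix.det_updateRow_sum C k (fun _ => (1 : F))
    simpa using this
  have hCc : (∑ i, C i) = ((t * N ^ 2) • (Pi.single k 1 : ι → F)) := by
    funext c
    rw [show (∑ i, C i) c = ∑ i, C i c from Finset.sum_apply c _ (fun i => C i)]
    by_cases hck : c = k
    · subst hck
      simp only [hCapp, if_true, Finset.sum_const, nsmul_eq_mul, hNdef, Finset.card_univ,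
        Pi.smul_apply, Pi.single_eq_same, smul_eq_mul, mul_one]
      ring
    · simp only [hCapp, hck, if_false, Pi.smul_apply, Pi.single_apply, smul_eq_mul]
      rw [hc c]
      simp [hck]
  -- Step 4 : pull out the scalar
  have h5 : (C.updateRow k ((t * N ^ 2) • (Pi.single k 1 : ι → F))).det
      = (t * N ^ 2) * (C.updateRow k (Pi.single k (1 : F))).det := by
    rw [Matrix.det_updateRow_smul]
  -- Step 5 : cofactor lemma
  set M₀ : Matrix ι ι F := C.updateRow k (Pi.single k (1 : F)) with hM₀
  have h6 : M₀.det = (M₀.submatrix (fun x : {z : ι // z ≠ k} => x.val)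
      (fun x : {z : ι // z ≠ k} => x.val)).det := by
    apply det_eq_submatrix_of_row_single
    · intro c hckne
      simp [hM₀, Matrix.updateRow_self, Pi.single_apply, hckne]
    · simp [hM₀, Matrix.updateRow_self, Pi.single_apply]
  have h7 : M₀.submatrix (fun x : {z : ι // z ≠ k} => x.val)
      (fun x : {z : ι // z ≠ k} => x.val)
      = A.submatrix (fun x : {z : ι // z ≠ k} => x.val) (fun x : {z : ι // z ≠ k} => x.val) := by
    ext x y
    simp [hM₀, Matrix.submatrix_apply, Matrix.updateRow_ne x.2, hCapp, y.2]
  calc M.det = (M.updateCol k (fun r => ∑ c, M r c)).det := h1.symm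
    _ = (C * T).det := by rw [hB, hBCT]
    _ = C.det := by rw [Matrix.det_mul, hdetT, mul_one]
    _ = (C.updateRow k (∑ i, C i)).det := h3.symm
    _ = (t * N ^ 2) * M₀.det := by rw [hCc, h5]
    _ = t * N ^ 2 * (A.submatrix (fun x : {z : ι // z ≠ k} => x.val)
          (fun x : {z : ι // z ≠ k} => x.val)).det := by rw [h6, h7]
    _ = _ := by ring

private lemma fourier_block {F : Type*} [Field F]
    {G : Type*} [CommGroup G] [Fintype G] [DecidableEq G]
    [Fintype (G →* Fˣ)] [DecidableEq (G →* Fˣ)] (m : ℕ)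
    (W : G → Matrix (Fin m) (Fin m) F)
    (D : Matrix (Fin m) (Fin m) F)
    (LY : Matrix (Fin m × G) (Fin m × G) F)
    (hLY : ∀ x y : Fin m × G,
      LY x y = (if x.2 = y.2 then D x.1 y.1 else 0) - W (x.2⁻¹ * y.2) x.1 y.1)
    (hsum1 : ∀ ψ : G →* Fˣ, ∑ g, ((ψ g : Fˣ) : F)
      = if ψ = 1 then (Fintype.card G : F) else 0)
    (horth : ∀ ψ χ : G →* Fˣ, ∑ g, ((ψ g : Fˣ) : F) * (((χ g)⁻¹ : Fˣ) : F)
      = if ψ = χ then (Fintype.card G : F) else 0) :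
    (Matrix.of fun (x : Fin m × (G →* Fˣ)) (y : Fin m × G) =>
        if x.1 = y.1 then ((x.2 y.2 : Fˣ) : F) else 0)
      * (LY + Matrix.of fun _ _ => (1 : F))
      * (Matrix.of fun (y : Fin m × G) (x : Fin m × (G →* Fˣ)) =>
          if y.1 = x.1 then (((x.2 y.2)⁻¹ : Fˣ) : F) else 0)
      = Matrix.blockDiagonal (fun ψ : G →* Fˣ =>
          (Fintype.card G : F) • (D - ∑ g, (((ψ g)⁻¹ : Fˣ) : F) • W g)
            + if ψ = 1 then Matrix.of (fun _ _ => (Fintype.card G : F) ^ 2) else 0) := by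
  classical
  set n : ℕ := Fintype.card G with hn
  have hsuminv : ∀ χ : G →* Fˣ, ∑ h, (((χ h)⁻¹ : Fˣ) : F) = if χ = 1 then (n : F) else 0 := by
    intro χ
    have h' := hsum1 χ⁻¹
    simp only [MonoidHom.inv_apply] at h'
    rcases eq_or_ne χ 1 with h | h
    · subst h; rw [if_pos (MonoidHom.ext fun g => by simp [MonoidHom.inv_apply])] at h'; simpa using h'
    · rw [h', if_neg (fun hc => h (MonoidHom.ext fun g => by simpa [MonoidHom.inv_apply] using DFunLike.congr_fun hc g)), if_neg h]
  set LYJ : Matrix (Fin m × G) (Fin m × G) F := LY + Matrix.of fun _ _ => (1 : F) with hLYJ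
  have hLYJapp : ∀ (i : Fin m) (g : G) (j : Fin m) (h : G),
      LYJ (i, g) (j, h)
        = (if g = h then D i j else 0) - W (g⁻¹ * h) i j + 1 := by
    intro i g j h
    simp [hLYJ, hLY (i, g) (j, h)]
  ext ⟨i, ψ⟩ ⟨j, χ⟩
  -- compute the LHS entry
  have hPL : ∀ (l : Fin m) (h : G),
      ((Matrix.of fun (x : Fin m × (G →* Fˣ)) (y : Fin m × G) =>
        if x.1 = y.1 then ((x.2 y.2 : Fˣ) : F) else 0) * LYJ) (i, ψ) (l, h)
        = ∑ g, ((ψ g : Fˣ) : F) * LYJ (i, g) (l, h) := by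
    intro l h
    rw [Matrix.mul_apply, Fintype.sum_prod_type]
    simp only [Matrix.of_apply, ite_mul, zero_mul]
    rw [Finset.sum_comm]
    simp [Finset.sum_ite_eq]
  have hLHS : ((Matrix.of fun (x : Fin m × (G →* Fˣ)) (y : Fin m × G) =>
        if x.1 = y.1 then ((x.2 y.2 : Fˣ) : F) else 0) * LYJ
      * (Matrix.of fun (y : Fin m × G) (x : Fin m × (G →* Fˣ)) =>
          if y.1 = x.1 then (((x.2 y.2)⁻¹ : Fˣ) : F) else 0)) (i, ψ) (j, χ)
      = ∑ h, ∑ g, ((ψ g : Fˣ) : F) * LYJ (i, g) (j, h) * (((χ h)⁻¹ : Fˣ) : F) := by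
    rw [Matrix.mul_apply, Fintype.sum_prod_type]
    rw [Finset.sum_comm]
    refine Finset.sum_congr rfl fun h _ => ?_
    calc ∑ l, ((Matrix.of fun (x : Fin m × (G →* Fˣ)) (y : Fin m × G) =>
          if x.1 = y.1 then ((x.2 y.2 : Fˣ) : F) else 0) * LYJ) (i, ψ) (l, h) *
          (Matrix.of fun (y : Fin m × G) (x : Fin m × (G →* Fˣ)) =>
            if y.1 = x.1 then (((x.2 y.2)⁻¹ : Fˣ) : F) else 0) (l, h) (j, χ)
        = ∑ l, if l = j then ((Matrix.of fun (x : Fin m × (G →* Fˣ)) (y : Fin m × G) =>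
            if x.1 = y.1 then ((x.2 y.2 : Fˣ) : F) else 0) * LYJ) (i, ψ) (l, h)
              * (((χ h)⁻¹ : Fˣ) : F) else 0 := by
          refine Finset.sum_congr rfl fun l _ => ?_
          simp only [Matrix.of_apply]
          split_ifs <;> ring
      _ = ((Matrix.of fun (x : Fin m × (G →* Fˣ)) (y : Fin m × G) =>
            if x.1 = y.1 then ((x.2 y.2 : Fˣ) : F) else 0) * LYJ) (i, ψ) (j, h)
              * (((χ h)⁻¹ : Fˣ) : F) := by
          rw [Finset.sum_ite_eq' Finset.univ j]
          simp
      _ = (∑ g, ((ψ g : Fˣ) : F) * LYJ (i, g) (j, h)) * (((χ h)⁻¹ : Fˣ) : F) := by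
          rw [hPL]
      _ = ∑ g, ((ψ g : Fˣ) : F) * LYJ (i, g) (j, h) * (((χ h)⁻¹ : Fˣ) : F) := by
          rw [Finset.sum_mul]
  rw [hLHS]
  -- expand into three sums
  have hexp : ∀ (h g : G), ((ψ g : Fˣ) : F) * LYJ (i, g) (j, h) * (((χ h)⁻¹ : Fˣ) : F)
      = (if g = h then ((ψ g : Fˣ) : F) * D i j * (((χ h)⁻¹ : Fˣ) : F) else 0)
        - ((ψ g : Fˣ) : F) * W (g⁻¹ * h) i j * (((χ h)⁻¹ : Fˣ) : F)
        + ((ψ g : Fˣ) : F) * (((χ h)⁻¹ : Fˣ) : F) := by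
    intro h g
    rw [hLYJapp]
    split_ifs <;> ring
  rw [Finset.sum_congr rfl fun h _ => Finset.sum_congr rfl fun g _ => hexp h g]
  simp only [Finset.sum_add_distrib, Finset.sum_sub_distrib]
  -- S1
  have hS1 : ∑ h, ∑ g, (if g = h then ((ψ g : Fˣ) : F) * D i j * (((χ h)⁻¹ : Fˣ) : F) else 0)
      = (if ψ = χ then (n : F) else 0) * D i j := by
    rw [Finset.sum_comm]
    have : ∀ g : G, ∑ h, (if g = h then ((ψ g : Fˣ) : F) * D i j * (((χ h)⁻¹ : Fˣ) : F) else 0)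
        = ((ψ g : Fˣ) : F) * (((χ g)⁻¹ : Fˣ) : F) * D i j := by
      intro g
      rw [Finset.sum_ite_eq Finset.univ g]
      simp only [Finset.mem_univ, if_true]
      ring
    rw [Finset.sum_congr rfl fun g _ => this g, ← Finset.sum_mul, horth]
  -- S2
  have hS2 : ∑ h, ∑ g, ((ψ g : Fˣ) : F) * W (g⁻¹ * h) i j * (((χ h)⁻¹ : Fˣ) : F)
      = (if ψ = χ then (n : F) else 0) * ∑ u, (((χ u)⁻¹ : Fˣ) : F) * W u i j := by
    rw [Finset.sum_comm]
    have inner : ∀ g : G, ∑ h, ((ψ g : Fˣ) : F) * W (g⁻¹ * h) i j * (((χ h)⁻¹ : Fˣ) : F)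
        = ((ψ g : Fˣ) : F) * (((χ g)⁻¹ : Fˣ) : F) * ∑ u, (((χ u)⁻¹ : Fˣ) : F) * W u i j := by
      intro g
      rw [Finset.mul_sum]
      refine Fintype.sum_equiv (Equiv.mulLeft g⁻¹) _ _ fun x => ?_
      simp only [Equiv.coe_mulLeft]
      have hkey : (((χ g)⁻¹ : Fˣ) : F) * (((χ (g⁻¹ * x))⁻¹ : Fˣ) : F) = (((χ x)⁻¹ : Fˣ) : F) := by
        rw [← Units.val_mul, ← mul_inv, ← _root_.map_mul, mul_inv_cancel_left]
      linear_combination -((ψ g : Fˣ) : F) * W (g⁻¹ * x) i j * hkey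
    rw [Finset.sum_congr rfl fun g _ => inner g, ← Finset.sum_mul, horth]
  -- S3
  have hS3 : ∑ h, ∑ g, ((ψ g : Fˣ) : F) * (((χ h)⁻¹ : Fˣ) : F)
      = (if ψ = 1 then (n : F) else 0) * (if χ = 1 then (n : F) else 0) := by
    rw [Finset.sum_comm, ← Finset.sum_mul_sum, hsum1, hsuminv]
  rw [hS1, hS2, hS3]
  have hBD : ∀ (ω : G →* Fˣ),
      ((Fintype.card G : F) • (D - ∑ g, (((ω g)⁻¹ : Fˣ) : F) • W g)
        + (if ω = 1 then Matrix.of (fun _ _ => (Fintype.card G : F) ^ 2) else 0) :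
          Matrix (Fin m) (Fin m) F) i j
      = (n : F) * D i j - (n : F) * (∑ u, (((ω u)⁻¹ : Fˣ) : F) * W u i j)
          + (if ω = 1 then (n : F) ^ 2 else 0) := by
    intro ω
    by_cases h1 : ω = 1 <;>
      simp [h1, Matrix.add_apply, Matrix.sub_apply, Matrix.smul_apply, Matrix.sum_apply,
        smul_eq_mul, mul_sub, Finset.mul_sum, ← hn]
  rw [Matrix.blockDiagonal_apply]
  by_cases hpc : ψ = χ
  · subst hpc
    rw [if_pos rfl, hBD ψ]
    by_cases h1 : ψ = 1 <;> simp [h1] <;> ring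
  · simp only [if_neg hpc]
    rcases eq_or_ne ψ 1 with h | h
    · have hχ : χ ≠ 1 := fun hc => hpc (h.trans hc.symm)
      simp [h, hχ]
    · simp [h]

end AuxLemmas

/-- Let `F` be an algebraically closed field of characteristic zero, `G` a
finite abelian group with `n := |G|`, and `m ≥ 1`.  Let `W : G → M_m(F)` satisfy
`(W g)ᵀ = W g⁻¹`.  Let `D` be the diagonal matrix of row sums of `Σ_g W g`, let
`L_X := D − Σ_g W g`, and let `L_Y` be the `(mn) × (mn)` matrix indexed by pairs `(i, g)`
with entries `δ_{g,h} D i j − (W (g⁻¹ h)) i j`.  For a character `ψ : G → Fˣ` set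
`h ψ := det (D − Σ_g ψ(g) • W g)`.  Then
`n · det(L_Y with row and column (1, 1_G) deleted)
  = det(L_X with the first row and column deleted) · ∏_{ψ ≠ 1} h ψ`,
where the product runs over all nontrivial characters of `G` (a finite collection; the
product is a `finprod`). -/
theorem stmt1 {F : Type*} [Field F] [IsAlgClosed F] [CharZero F]
    {G : Type*} [CommGroup G] [Fintype G] [DecidableEq G]
    (m : ℕ) (hm : 1 ≤ m)
    (W : G → Matrix (Fin m) (Fin m) F)
    (hW : ∀ g, (W g)ᵀ = W g⁻¹)
    (D : Matrix (Fin m) (Fin m) F)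
    (hD : D = Matrix.diagonal (fun i => ∑ j, (∑ g, W g) i j))
    (LX : Matrix (Fin m) (Fin m) F) (hLX : LX = D - ∑ g, W g)
    (LY : Matrix (Fin m × G) (Fin m × G) F)
    (hLY : ∀ x y : Fin m × G,
      LY x y = (if x.2 = y.2 then D x.1 y.1 else 0) - W (x.2⁻¹ * y.2) x.1 y.1) :
    (Fintype.card G : F) *
        (LY.submatrix
          (fun x : {z : Fin m × G // z ≠ (⟨0, hm⟩, 1)} => x.val)
          (fun x : {z : Fin m × G // z ≠ (⟨0, hm⟩, 1)} => x.val)).det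
      = (LX.submatrix
            (fun i : {z : Fin m // z ≠ ⟨0, hm⟩} => i.val)
            (fun i : {z : Fin m // z ≠ ⟨0, hm⟩} => i.val)).det *
          ∏ᶠ ψ ∈ {ψ : G →* Fˣ | ψ ≠ 1}, (D - ∑ g, (ψ g : F) • W g).det := by
  classical
  -- characters of G
  haveI : NeZero ((Monoid.exponent G : F)) :=
    ⟨Nat.cast_ne_zero.mpr Monoid.exponent_ne_zero_of_finite⟩
  obtain ⟨e₀⟩ := CommGroup.monoidHom_mulEquiv_of_hasEnoughRootsOfUnity G F
  haveI : Fintype (G →* Fˣ) := Fintype.ofEquiv G e₀.symm.toEquiv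
  have hcard : Fintype.card (G →* Fˣ) = Fintype.card G := Fintype.card_congr e₀.toEquiv
  have hm0 : (m : F) ≠ 0 := Nat.cast_ne_zero.mpr (by omega)
  have hn0 : (Fintype.card G : F) ≠ 0 := Nat.cast_ne_zero.mpr Fintype.card_ne_zero
  -- character sums
  have hsum : ∀ ψ : G →* Fˣ, ψ ≠ 1 → ∑ g, ((ψ g : Fˣ) : F) = 0 := by
    intro ψ hψ
    obtain ⟨g₀, hg₀⟩ : ∃ g₀, ψ g₀ ≠ 1 := by
      by_contra hcon
      push_neg at hcon
      exact hψ (MonoidHom.ext fun g => hcon g)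
    have key : ((ψ g₀ : Fˣ) : F) * ∑ g, ((ψ g : Fˣ) : F) = ∑ g, ((ψ g : Fˣ) : F) := by
      rw [Finset.mul_sum]
      refine Fintype.sum_bijective (fun g => g₀ * g) (Group.mulLeft_bijective g₀) _ _ fun g => ?_
      rw [_root_.map_mul, Units.val_mul]
    have hne : ((ψ g₀ : Fˣ) : F) - 1 ≠ 0 := by
      intro hcon
      apply hg₀
      ext
      rw [sub_eq_zero] at hcon
      simpa using hcon
    have : (((ψ g₀ : Fˣ) : F) - 1) * ∑ g, ((ψ g : Fˣ) : F) = 0 := by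
      rw [sub_mul, one_mul, key, sub_self]
    exact (mul_eq_zero.mp this).resolve_left hne
  have hsum1 : ∀ ψ : G →* Fˣ, ∑ g, ((ψ g : Fˣ) : F)
      = if ψ = 1 then (Fintype.card G : F) else 0 := by
    intro ψ
    split_ifs with h
    · subst h; simp
    · exact hsum ψ h
  have horth : ∀ ψ χ : G →* Fˣ, ∑ g, ((ψ g : Fˣ) : F) * (((χ g)⁻¹ : Fˣ) : F)
      = if ψ = χ then (Fintype.card G : F) else 0 := by
    intro ψ χ
    have key : ∀ g, ((ψ g : Fˣ) : F) * (((χ g)⁻¹ : Fˣ) : F) = (((ψ * χ⁻¹) g : Fˣ) : F) := by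
      intro g
      simp
    rw [Finset.sum_congr rfl fun g _ => key g, hsum1]
    congr 1
    exact propext (mul_inv_eq_one (a := ψ) (b := χ))
  -- symmetry of the total weight matrix
  have hS : (∑ g, W g)ᵀ = ∑ g, W g := by
    rw [Matrix.transpose_sum, Finset.sum_congr rfl fun g _ => hW g]
    exact Fintype.sum_equiv (Equiv.inv G) _ _ fun g => rfl
  have hSsymm : ∀ a b, (∑ g, W g) b a = (∑ g, W g) a b := by
    intro a b
    have := congrFun (congrFun hS a) b
    simpa [Matrix.transpose_apply] using this
  have hDsum : ∀ i, ∑ j, D i j = ∑ j, (∑ g, W g) i j := by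
    intro i
    rw [hD]
    simp [Matrix.diagonal_apply, Finset.sum_ite_eq]
  have hDcolsum : ∀ j, ∑ i, D i j = ∑ c, (∑ g, W g) j c := by
    intro j
    rw [hD]
    simp [Matrix.diagonal_apply, Finset.sum_ite_eq']
  -- row and column sums of LX vanish
  have hLXr : ∀ i, ∑ j, LX i j = 0 := by
    intro i
    rw [hLX]
    simp only [Matrix.sub_apply, Finset.sum_sub_distrib]
    rw [hDsum i, sub_self]
  have hLXc : ∀ j, ∑ i, LX i j = 0 := by
    intro j
    rw [hLX]
    simp only [Matrix.sub_apply, Finset.sum_sub_distrib]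
    rw [hDcolsum j, Finset.sum_congr rfl fun i _ => hSsymm j i, sub_self]
  -- row and column sums of LY vanish
  have hWsum : ∀ (g : G) (i j : Fin m), ∑ h, W (g⁻¹ * h) i j = (∑ u, W u) i j := by
    intro g i j
    rw [Matrix.sum_apply]
    refine (Fintype.sum_equiv (Equiv.mulLeft g) _ _ fun u => ?_).symm
    simp [inv_mul_cancel_left]
  have hWsum' : ∀ (h : G) (i j : Fin m), ∑ g, W (g⁻¹ * h) i j = (∑ u, W u) i j := by
    intro h i j
    rw [Matrix.sum_apply]
    refine (Fintype.sum_equiv ((Equiv.inv G).trans (Equiv.mulRight h)) _ _ fun u => ?_).symm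
    simp [Equiv.coe_mulRight]
  have hLYr : ∀ x : Fin m × G, ∑ y, LY x y = 0 := by
    rintro ⟨i, g⟩
    rw [Fintype.sum_prod_type]
    have inner : ∀ j : Fin m, ∑ h, LY (i, g) (j, h) = D i j - (∑ u, W u) i j := by
      intro j
      rw [Finset.sum_congr rfl fun h _ => hLY (i, g) (j, h), Finset.sum_sub_distrib]
      rw [Finset.sum_ite_eq Finset.univ g fun _ => D i j]
      simp [hWsum g i j]
    rw [Finset.sum_congr rfl fun j _ => inner j, Finset.sum_sub_distrib, hDsum i]
    exact sub_self _
  have hLYc : ∀ y : Fin m × G, ∑ x, LY x y = 0 := by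
    rintro ⟨j, h⟩
    rw [Fintype.sum_prod_type]
    have inner : ∀ i : Fin m, ∑ g, LY (i, g) (j, h) = D i j - (∑ u, W u) i j := by
      intro i
      rw [Finset.sum_congr rfl fun g _ => hLY (i, g) (j, h), Finset.sum_sub_distrib]
      rw [Finset.sum_ite_eq' Finset.univ h fun _ => D i j]
      simp [hWsum' h i j]
    rw [Finset.sum_congr rfl fun i _ => inner i, Finset.sum_sub_distrib, hDcolsum j,
      Finset.sum_congr rfl fun i _ => hSsymm j i]
    exact sub_self _
  -- abbreviations
  -- deleted determinants via det_add_const_eq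
  have hcardY0 : (Fintype.card (Fin m × G) : F) ≠ 0 := by
    simp only [Fintype.card_prod, Fintype.card_fin]
    push_cast
    exact mul_ne_zero hm0 hn0
  have hYdel := det_add_const_eq LY ((⟨0, hm⟩, 1) : Fin m × G) 1 hLYr hLYc hcardY0
  have hcardX0 : (Fintype.card (Fin m) : F) ≠ 0 := by simpa using hm0
  have hXdel := det_add_const_eq LX (⟨0, hm⟩ : Fin m) (Fintype.card G : F) hLXr hLXc hcardX0
  -- Fourier factorization
  have hF := fourier_block m W D LY hLY hsum1 horth
  set P : Matrix (Fin m × (G →* Fˣ)) (Fin m × G) F :=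
    Matrix.of fun x y => if x.1 = y.1 then ((x.2 y.2 : Fˣ) : F) else 0 with hPdef
  set Q : Matrix (Fin m × G) (Fin m × (G →* Fˣ)) F :=
    Matrix.of fun y x => if y.1 = x.1 then (((x.2 y.2)⁻¹ : Fˣ) : F) else 0 with hQdef
  set LYJ : Matrix (Fin m × G) (Fin m × G) F := LY + Matrix.of fun _ _ => (1 : F) with hLYJdef
  set σ : (Fin m × (G →* Fˣ)) ≃ (Fin m × G) := (Equiv.refl (Fin m)).prodCongr e₀.toEquiv with hσ
  -- P * Q = n • 1
  have hPQ : P * Q = (Fintype.card G : F) •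
      (1 : Matrix (Fin m × (G →* Fˣ)) (Fin m × (G →* Fˣ)) F) := by
    ext ⟨i, ψ⟩ ⟨j, χ⟩
    rw [Matrix.mul_apply, Fintype.sum_prod_type]
    have hterm : ∀ k g, P (i, ψ) (k, g) * Q (k, g) (j, χ)
        = if i = k then (if k = j then ((ψ g : Fˣ) : F) * (((χ g)⁻¹ : Fˣ) : F) else 0)
          else 0 := by
      intro k g
      simp only [hPdef, hQdef, Matrix.of_apply]
      split_ifs <;> ring
    rw [Finset.sum_congr rfl fun k _ => Finset.sum_congr rfl fun g _ => hterm k g]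
    have hinner : ∀ k, (∑ g, if i = k then
        (if k = j then ((ψ g : Fˣ) : F) * (((χ g)⁻¹ : Fˣ) : F) else 0) else 0)
        = if i = k then (if k = j then
            ∑ g, ((ψ g : Fˣ) : F) * (((χ g)⁻¹ : Fˣ) : F) else 0) else 0 := by
      intro k
      split_ifs <;> simp
    rw [Finset.sum_congr rfl fun k _ => hinner k, Finset.sum_ite_eq Finset.univ i]
    simp only [Finset.mem_univ, if_true]
    rw [horth ψ χ]
    simp only [Matrix.smul_apply, Matrix.one_apply, smul_eq_mul, Prod.mk.injEq]
    by_cases hij : i = j <;> by_cases hpc : ψ = χ <;> simp [hij, hpc]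
  -- reindexing to square matrices
  have hsub1 : P.submatrix id ⇑σ * LYJ.submatrix ⇑σ ⇑σ = (P * LYJ).submatrix id ⇑σ :=
    Matrix.submatrix_mul_equiv P LYJ id σ ⇑σ
  have hsub2 : (P * LYJ).submatrix id ⇑σ * Q.submatrix ⇑σ id
      = (P * LYJ * Q).submatrix id id :=
    Matrix.submatrix_mul_equiv (P * LYJ) Q id σ id
  have hsub3 : P.submatrix id ⇑σ * Q.submatrix ⇑σ id = (P * Q).submatrix id id :=
    Matrix.submatrix_mul_equiv P Q id σ id
  have hcardprod : Fintype.card (Fin m × (G →* Fˣ)) = m * Fintype.card G := by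
    simp [hcard]
  have hdetPQ : (P.submatrix id ⇑σ).det * (Q.submatrix ⇑σ id).det
      = (Fintype.card G : F) ^ (m * Fintype.card G) := by
    rw [← Matrix.det_mul, hsub3, Matrix.submatrix_id_id, hPQ, Matrix.det_smul, Matrix.det_one,
      mul_one, hcardprod]
  have hchain : LYJ.det * (Fintype.card G : F) ^ (m * Fintype.card G)
      = ∏ ψ : G →* Fˣ, ((Fintype.card G : F) • (D - ∑ g, (((ψ g)⁻¹ : Fˣ) : F) • W g)
          + if ψ = 1 then Matrix.of (fun _ _ => (Fintype.card G : F) ^ 2) else 0).det := by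
    have h1 : (P.submatrix id ⇑σ).det * LYJ.det * (Q.submatrix ⇑σ id).det
        = ∏ ψ : G →* Fˣ, ((Fintype.card G : F) • (D - ∑ g, (((ψ g)⁻¹ : Fˣ) : F) • W g)
          + if ψ = 1 then Matrix.of (fun _ _ => (Fintype.card G : F) ^ 2) else 0).det := by
      rw [← Matrix.det_submatrix_equiv_self σ LYJ, ← Matrix.det_mul, ← Matrix.det_mul,
        hsub1, hsub2, Matrix.submatrix_id_id, hF, Matrix.det_blockDiagonal]
    rw [← h1, ← hdetPQ]
    ring
  -- factor each block determinant
  have hblock : ∀ ψ : G →* Fˣ,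
      ((Fintype.card G : F) • (D - ∑ g, (((ψ g)⁻¹ : Fˣ) : F) • W g)
        + if ψ = 1 then Matrix.of (fun _ _ => (Fintype.card G : F) ^ 2) else 0).det
      = (Fintype.card G : F) ^ m *
        ((D - ∑ g, (((ψ g)⁻¹ : Fˣ) : F) • W g)
          + if ψ = 1 then Matrix.of (fun _ _ => (Fintype.card G : F)) else 0).det := by
    intro ψ
    have hfac : ((Fintype.card G : F) • (D - ∑ g, (((ψ g)⁻¹ : Fˣ) : F) • W g)
        + if ψ = 1 then Matrix.of (fun _ _ => (Fintype.card G : F) ^ 2) else 0)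
        = (Fintype.card G : F) • ((D - ∑ g, (((ψ g)⁻¹ : Fˣ) : F) • W g)
          + if ψ = 1 then Matrix.of (fun _ _ => (Fintype.card G : F)) else 0) := by
      by_cases h1 : ψ = 1 <;> ext i j <;> simp [h1] <;> ring
    rw [hfac, Matrix.det_smul, Fintype.card_fin]
  -- split off the trivial character
  have hprodsplit : ∏ ψ : G →* Fˣ,
      ((D - ∑ g, (((ψ g)⁻¹ : Fˣ) : F) • W g)
        + if ψ = 1 then Matrix.of (fun _ _ => (Fintype.card G : F)) else 0).det
      = (LX + Matrix.of fun _ _ => (Fintype.card G : F)).det *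
        ∏ ψ ∈ Finset.univ.erase (1 : G →* Fˣ),
          (D - ∑ g, (((ψ g)⁻¹ : Fˣ) : F) • W g).det := by
    rw [← Finset.mul_prod_erase Finset.univ _ (Finset.mem_univ (1 : G →* Fˣ))]
    congr 1
    · congr 1
      rw [if_pos rfl, hLX]
      ext i j
      simp
    · refine Finset.prod_congr rfl fun ψ hψ => ?_
      rw [if_neg (Finset.mem_erase.mp hψ).1, add_zero]
  -- reindex the nontrivial product by inversion
  have hinvprod : ∏ ψ ∈ Finset.univ.erase (1 : G →* Fˣ),
        (D - ∑ g, (((ψ g)⁻¹ : Fˣ) : F) • W g).det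
      = ∏ ψ ∈ Finset.univ.erase (1 : G →* Fˣ),
        (D - ∑ g, ((ψ g : Fˣ) : F) • W g).det := by
    refine Finset.prod_bij' (fun ψ _ => ψ⁻¹) (fun ψ _ => ψ⁻¹) ?_ ?_ ?_ ?_ ?_
    · intro ψ hψ
      rw [Finset.mem_erase]
      exact ⟨fun hcon => (Finset.mem_erase.mp hψ).1 (MonoidHom.ext fun g => by simpa [MonoidHom.inv_apply] using DFunLike.congr_fun hcon g), Finset.mem_univ _⟩
    · intro ψ hψ
      rw [Finset.mem_erase]
      exact ⟨fun hcon => (Finset.mem_erase.mp hψ).1 (MonoidHom.ext fun g => by simpa [MonoidHom.inv_apply] using DFunLike.congr_fun hcon g), Finset.mem_univ _⟩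
    · intro ψ _; exact inv_inv ψ
    · intro ψ _; exact inv_inv ψ
    · intro ψ _
      simp [MonoidHom.inv_apply]
  -- put the determinant identities together
  have hmain : LYJ.det = (LX + Matrix.of fun _ _ => (Fintype.card G : F)).det *
      ∏ ψ ∈ Finset.univ.erase (1 : G →* Fˣ),
        (D - ∑ g, ((ψ g : Fˣ) : F) • W g).det := by
    have hpow : (Fintype.card G : F) ^ (m * Fintype.card G) ≠ 0 := pow_ne_zero _ hn0
    apply mul_right_cancel₀ hpow
    rw [hchain, Finset.prod_congr rfl fun ψ _ => hblock ψ, Finset.prod_mul_distrib,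
      Finset.prod_const, Finset.card_univ, hcard, hprodsplit, hinvprod, ← pow_mul]
    ring
  -- translate the finprod in the goal
  have hfin : ∏ᶠ ψ ∈ {ψ : G →* Fˣ | ψ ≠ 1}, (D - ∑ g, ((ψ g : Fˣ) : F) • W g).det
      = ∏ ψ ∈ Finset.univ.erase (1 : G →* Fˣ),
        (D - ∑ g, ((ψ g : Fˣ) : F) • W g).det := by
    rw [show {ψ : G →* Fˣ | ψ ≠ 1}
        = ↑(Finset.univ.filter fun ψ : G →* Fˣ => ψ ≠ 1) by ext ψ; simp,
      finprod_mem_coe_finset, Finset.filter_ne']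
  rw [hfin]
  -- final algebra
  have hcY : (Fintype.card (Fin m × G) : F) = (m : F) * (Fintype.card G : F) := by
    simp
  have hcX : (Fintype.card (Fin m) : F) = (m : F) := by simp
  rw [hcY] at hYdel
  rw [hcX] at hXdel
  have hEq : ((m : F) * (Fintype.card G : F)) ^ 2 *
      (LY.submatrix
        (fun x : {z : Fin m × G // z ≠ (⟨0, hm⟩, 1)} => x.val)
        (fun x : {z : Fin m × G // z ≠ (⟨0, hm⟩, 1)} => x.val)).det
      = (Fintype.card G : F) * (m : F) ^ 2 *
        ((LX.submatrix
          (fun i : {z : Fin m // z ≠ ⟨0, hm⟩} => i.val)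
          (fun i : {z : Fin m // z ≠ ⟨0, hm⟩} => i.val)).det *
        ∏ ψ ∈ Finset.univ.erase (1 : G →* Fˣ),
          (D - ∑ g, ((ψ g : Fˣ) : F) • W g).det) := by
    have := hmain
    rw [hYdel, hXdel] at this
    linear_combination this
  apply mul_left_cancel₀ (mul_ne_zero (pow_ne_zero 2 hm0) hn0)
  linear_combination hEq
end

section
/- Fix a prime p and integers d ≥ 1, m ≥ 1, and let W be a tower datum with associated quantities κ_n(W) ∈ ℚ_p for n ≥ 0. If κ_{n₀}(W) = 0 for some n₀ ≥ 0, then κ_n(W) = 0 for all n ≥ n₀. -/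
open Matrix
open scoped BigOperators

/-- The diagonal matrix `D` associated to a tower datum `W`: its `(i,i)` entry is the `i`-th
row sum of `Σ_a W a` (a `finsum`, as `W` is finitely supported). -/
noncomputable def towerD (p : ℕ) [Fact p.Prime] (d m : ℕ)
    (W : (Fin d → ℤ_[p]) → Matrix (Fin (m + 1)) (Fin (m + 1)) ℚ_[p]) :
    Matrix (Fin (m + 1)) (Fin (m + 1)) ℚ_[p] :=
  Matrix.diagonal (fun i => ∑ j, (∑ᶠ a, W a) i j)

/-- The `n`-th layer Laplacian `L_n` of a tower datum `W`: the square matrix of size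
`(m+1) · p^{dn}` indexed by pairs `(i, g) ∈ {1,…,m+1} × (ℤ/p^nℤ)^d` with entries
`L_n (i,g) (j,h) = δ_{g,h} D i j − Σ_{a : r_n(a) = h − g} (W a) i j`, where
`r_n : ℤ_p^d → (ℤ/p^nℤ)^d` is coordinatewise reduction. -/
noncomputable def towerL (p : ℕ) [Fact p.Prime] (d m : ℕ)
    (W : (Fin d → ℤ_[p]) → Matrix (Fin (m + 1)) (Fin (m + 1)) ℚ_[p]) (n : ℕ) :
    Matrix ((Fin (m + 1)) × (Fin d → ZMod (p ^ n)))
      ((Fin (m + 1)) × (Fin d → ZMod (p ^ n))) ℚ_[p] :=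
  fun x y =>
    (if x.2 = y.2 then towerD p d m W x.1 y.1 else 0) -
      ∑ᶠ a ∈ {a : Fin d → ℤ_[p] |
          (fun i => PadicInt.toZModPow n (a i)) = y.2 - x.2}, W a x.1 y.1

/-- The `n`-th weighted complexity `κ_n(W)` of a tower datum `W`: the determinant of `L_n`
with the row and the column indexed by `(1, 0)` (here `(0, 0)` with `0`-based indexing)
deleted. -/
noncomputable def towerKappa (p : ℕ) [Fact p.Prime] (d m : ℕ)
    (W : (Fin d → ℤ_[p]) → Matrix (Fin (m + 1)) (Fin (m + 1)) ℚ_[p]) (n : ℕ) : ℚ_[p] :=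
  ((towerL p d m W n).submatrix
      (fun x : {z : (Fin (m + 1)) × (Fin d → ZMod (p ^ n)) // z ≠ (0, 0)} => x.val)
      (fun x : {z : (Fin (m + 1)) × (Fin d → ZMod (p ^ n)) // z ≠ (0, 0)} => x.val)).det


private lemma sum_fiber {α γ M : Type*} [Fintype γ] [DecidableEq γ] [AddCommMonoid M]
    (T : Finset α) (φ : α → γ) (F : α → γ → M) :
    ∑ c : γ, ∑ a ∈ T.filter (fun a => φ a = c), F a c = ∑ a ∈ T, F a (φ a) := by
  simp_rw [Finset.sum_filter]
  rw [Finset.sum_comm]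
  simp

private lemma aux_finsum {p : ℕ} [Fact p.Prime] {d m : ℕ}
    {W : (Fin d → ℤ_[p]) → Matrix (Fin (m + 1)) (Fin (m + 1)) ℚ_[p]}
    (hfin : (Function.support W).Finite)
    (i j : Fin (m + 1)) (s : Set (Fin d → ℤ_[p])) [DecidablePred (· ∈ s)] :
    ∑ᶠ a ∈ s, W a i j = ∑ a ∈ hfin.toFinset.filter (· ∈ s), W a i j := by
  apply finsum_mem_eq_sum_of_inter_support_eq
  ext a
  simp only [Set.mem_inter_iff, Function.mem_support, Finset.coe_filter,
    Set.mem_setOf_eq, Set.Finite.mem_toFinset]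
  constructor
  · rintro ⟨h1, h2⟩
    exact ⟨⟨fun hw => h2 (by simp [hw]), h1⟩, h2⟩
  · rintro ⟨⟨_, h1⟩, h2⟩
    exact ⟨h1, h2⟩

private lemma aux_symmsum {p : ℕ} [Fact p.Prime] {d m : ℕ}
    {W : (Fin d → ℤ_[p]) → Matrix (Fin (m + 1)) (Fin (m + 1)) ℚ_[p]}
    (hfin : (Function.support W).Finite)
    (hsym : ∀ a, (W a)ᵀ = W (-a))
    (i j : Fin (m + 1)) :
    ∑ a ∈ hfin.toFinset, W a i j = ∑ a ∈ hfin.toFinset, W a j i := by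
  have key : ∀ a : Fin d → ℤ_[p], W (-a) = 0 ↔ W a = 0 := fun a => by
    rw [← hsym a, Matrix.transpose_eq_zero]
  refine Finset.sum_equiv (Equiv.neg _) ?_ ?_
  · intro a
    simp only [Set.Finite.mem_toFinset, Function.mem_support, Equiv.neg_apply]
    exact not_congr (key a).symm
  · intro a _
    have : W (-a) j i = W a i j := by rw [← hsym a]; rfl
    simp [Equiv.neg_apply, this]

private lemma aux_colsum {p : ℕ} [Fact p.Prime] {d m : ℕ}
    {W : (Fin d → ℤ_[p]) → Matrix (Fin (m + 1)) (Fin (m + 1)) ℚ_[p]}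
    (hfin : (Function.support W).Finite)
    (hsym : ∀ a, (W a)ᵀ = W (-a))
    (n : ℕ) (y : (Fin (m + 1)) × (Fin d → ZMod (p ^ n))) :
    ∑ x, towerL p d m W n x y = 0 := by
  classical
  obtain ⟨j, h⟩ := y
  rw [Fintype.sum_prod_type]
  have hL : ∀ (i : Fin (m + 1)) (g : Fin d → ZMod (p ^ n)),
      towerL p d m W n (i, g) (j, h) =
      (if g = h then towerD p d m W i j else 0)
        - ∑ a ∈ hfin.toFinset.filter
            (fun a => (h - fun t => PadicInt.toZModPow n (a t)) = g), W a i j := by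
    intro i g
    rw [towerL, aux_finsum hfin]
    congr 1
    refine Finset.sum_congr ?_ (fun _ _ => rfl)
    apply Finset.filter_congr
    intro a _
    simp only [Set.mem_setOf_eq]
    constructor
    · intro hh
      rw [hh]; exact sub_sub_cancel _ _
    · intro hh
      rw [← hh]; exact (sub_sub_cancel _ _).symm
  simp_rw [hL, Finset.sum_sub_distrib]
  rw [sub_eq_zero]
  have h1 : ∀ i : Fin (m + 1),
      (∑ g : Fin d → ZMod (p ^ n), if g = h then towerD p d m W i j else 0)
        = towerD p d m W i j := by
    intro i; simp
  have h2 : ∀ i : Fin (m + 1),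
      (∑ g : Fin d → ZMod (p ^ n), ∑ a ∈ hfin.toFinset.filter
          (fun a => (h - fun t => PadicInt.toZModPow n (a t)) = g), W a i j)
        = ∑ a ∈ hfin.toFinset, W a i j :=
    fun i => sum_fiber hfin.toFinset _ (fun a _ => W a i j)
  simp_rw [h1, h2]
  have h3 : ∀ i : Fin (m + 1), towerD p d m W i j
      = if i = j then ∑ k, ∑ a ∈ hfin.toFinset, W a i k else 0 := by
    intro i
    rw [towerD, Matrix.diagonal_apply, finsum_eq_sum W hfin]
    simp_rw [Matrix.sum_apply]
  simp_rw [h3]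
  rw [Finset.sum_ite_eq' Finset.univ j
    (fun i => ∑ k, ∑ a ∈ hfin.toFinset, W a i k)]
  simp only [Finset.mem_univ, if_true]
  calc ∑ k : Fin (m+1), ∑ a ∈ hfin.toFinset, W a j k
      = ∑ k : Fin (m+1), ∑ a ∈ hfin.toFinset, W a k j :=
        Finset.sum_congr rfl fun k _ => (aux_symmsum hfin hsym k j).symm
    _ = ∑ x : Fin (m+1), ∑ a ∈ hfin.toFinset, W a x j := rfl

private lemma aux_transfer {p : ℕ} [Fact p.Prime] {d m : ℕ}
    {W : (Fin d → ℤ_[p]) → Matrix (Fin (m + 1)) (Fin (m + 1)) ℚ_[p]}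
    (hfin : (Function.support W).Finite)
    {n₀ n : ℕ} (hn : n₀ ≤ n)
    (v : (Fin (m + 1)) × (Fin d → ZMod (p ^ n₀)) → ℚ_[p])
    (i : Fin (m + 1)) (g : Fin d → ZMod (p ^ n)) :
    (towerL p d m W n).mulVec
        (fun x => v (x.1, fun t => ZMod.castHom (pow_dvd_pow p hn) (ZMod (p ^ n₀)) (x.2 t))) (i, g)
      = (towerL p d m W n₀).mulVec v
          (i, fun t => ZMod.castHom (pow_dvd_pow p hn) (ZMod (p ^ n₀)) (g t)) := by
  classical
  have expand : ∀ (N : ℕ) (g' : Fin d → ZMod (p ^ N)) (u : (Fin d → ZMod (p ^ N)) → ℚ_[p])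
      (j : Fin (m + 1)),
      (∑ h : Fin d → ZMod (p ^ N), towerL p d m W N (i, g') (j, h) * u h)
        = towerD p d m W i j * u g'
          - ∑ a ∈ hfin.toFinset,
              W a i j * u ((fun t => PadicInt.toZModPow N (a t)) + g') := by
    intro N g' u j
    have hL : ∀ h : Fin d → ZMod (p ^ N), towerL p d m W N (i, g') (j, h) =
        (if g' = h then towerD p d m W i j else 0)
          - ∑ a ∈ hfin.toFinset.filter
              (fun a => ((fun t => PadicInt.toZModPow N (a t)) + g') = h), W a i j := by
      intro h
      rw [towerL, aux_finsum hfin]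
      congr 1
      refine Finset.sum_congr ?_ (fun _ _ => rfl)
      apply Finset.filter_congr
      intro a _
      simp only [Set.mem_setOf_eq]
      exact eq_sub_iff_add_eq
    simp_rw [hL, sub_mul, Finset.sum_sub_distrib, ite_mul, zero_mul,
      Finset.sum_ite_eq, Finset.mem_univ, if_true, Finset.sum_mul]
    rw [sum_fiber hfin.toFinset (fun a => (fun t => PadicInt.toZModPow N (a t)) + g')
      (fun a h => W a i j * u h)]
  simp only [Matrix.mulVec, dotProduct]
  rw [Fintype.sum_prod_type, Fintype.sum_prod_type]
  refine Finset.sum_congr rfl fun j _ => ?_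
  rw [expand n g (fun h => v (j, fun t => ZMod.castHom (pow_dvd_pow p hn) (ZMod (p ^ n₀)) (h t))) j,
    expand n₀ (fun t => ZMod.castHom (pow_dvd_pow p hn) (ZMod (p ^ n₀)) (g t)) (fun h => v (j, h)) j]
  have hkey : ∀ a : Fin d → ℤ_[p],
      ((fun t => ZMod.castHom (pow_dvd_pow p hn) (ZMod (p ^ n₀))
          (((fun t => PadicInt.toZModPow n (a t)) + g) t)) : Fin d → ZMod (p ^ n₀))
        = (fun t => PadicInt.toZModPow n₀ (a t))
            + (fun t => ZMod.castHom (pow_dvd_pow p hn) (ZMod (p ^ n₀)) (g t)) := by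
    intro a
    funext t
    simp only [Pi.add_apply, map_add, ZMod.castHom_apply,
      PadicInt.cast_toZModPow _ _ hn]
  congr 1
  refine Finset.sum_congr rfl fun a _ => ?_
  rw [hkey a]

private lemma sum_split {ι M : Type*} [Fintype ι] [DecidableEq ι] [AddCommMonoid M]
    (f : ι → M) (i : ι) :
    ∑ j, f j = f i + ∑ j : {j // j ≠ i}, f j.val := by
  rw [← Finset.add_sum_erase _ f (Finset.mem_univ i)]
  congr 1
  exact Finset.sum_subtype (p := fun j => j ≠ i) (Finset.univ.erase i)
    (fun x => by simp [Finset.mem_erase]) f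

/-- Let `p` be prime, `d ≥ 1`, `m ≥ 1` (matrices of size `m + 1` with
`m : ℕ`), and let `W` be a tower datum: a finitely supported family of `(m+1) × (m+1)`
matrices over `ℚ_p` with `(W a)ᵀ = W (−a)`, with associated quantities `κ_n(W)`.
If `κ_{n₀}(W) = 0` for some `n₀`, then `κ_n(W) = 0` for all `n ≥ n₀`. -/
theorem stmt8 (p : ℕ) [Fact p.Prime] (d m : ℕ) (hd : 1 ≤ d)
    (W : (Fin d → ℤ_[p]) → Matrix (Fin (m + 1)) (Fin (m + 1)) ℚ_[p])
    (hfin : (Function.support W).Finite)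
    (hsym : ∀ a, (W a)ᵀ = W (-a))
    (n₀ : ℕ) (h0 : towerKappa p d m W n₀ = 0) :
    ∀ n ≥ n₀, towerKappa p d m W n = 0 := by
  classical
  intro n hn
  rw [towerKappa] at h0
  obtain ⟨w, hw0, hww⟩ := Matrix.exists_mulVec_eq_zero_iff.mpr h0
  set A := towerL p d m W n₀ with hA
  set v : (Fin (m + 1)) × (Fin d → ZMod (p ^ n₀)) → ℚ_[p] :=
    fun y => if hy : y = (0, 0) then 0 else w ⟨y, hy⟩ with hv
  have hv00 : v (0, 0) = 0 := by simp [hv]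
  have hker1 : ∀ x, x ≠ ((0, 0) : (Fin (m + 1)) × (Fin d → ZMod (p ^ n₀))) →
      A.mulVec v x = 0 := by
    intro x hx
    have hthis := congrFun hww ⟨x, hx⟩
    simp only [Matrix.mulVec, dotProduct, Matrix.submatrix_apply, Pi.zero_apply] at hthis ⊢
    rw [sum_split (fun y => A x y * v y) (0, 0)]
    rw [hv00, mul_zero, zero_add, ← hthis]
    refine Finset.sum_congr rfl fun y _ => ?_
    congr 1
    simp only [hv]
    rw [dif_neg y.prop, Subtype.coe_eta]
  have hker : A.mulVec v = 0 := by
    funext x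
    by_cases hx : x = ((0, 0) : (Fin (m + 1)) × (Fin d → ZMod (p ^ n₀)))
    · subst hx
      have hcol : ∀ y, A (0, 0) y
          = - ∑ x' : {z : (Fin (m + 1)) × (Fin d → ZMod (p ^ n₀)) // z ≠ (0, 0)},
              A x'.val y := by
        intro y
        have h0' := aux_colsum hfin hsym n₀ y
        rw [sum_split (fun x => A x y) (0, 0)] at h0'
        exact eq_neg_of_add_eq_zero_left h0'
      simp only [Matrix.mulVec, dotProduct, Pi.zero_apply]
      calc ∑ y, A (0, 0) y * v y
          = ∑ y, -(∑ x' : {z : (Fin (m + 1)) × (Fin d → ZMod (p ^ n₀)) // z ≠ (0, 0)},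
              A x'.val y * v y) := by
            refine Finset.sum_congr rfl fun y _ => ?_
            rw [hcol y, neg_mul, Finset.sum_mul]
        _ = -∑ y, ∑ x' : {z : (Fin (m + 1)) × (Fin d → ZMod (p ^ n₀)) // z ≠ (0, 0)},
              A x'.val y * v y := Finset.sum_neg_distrib _
        _ = -∑ x' : {z : (Fin (m + 1)) × (Fin d → ZMod (p ^ n₀)) // z ≠ (0, 0)},
              ∑ y, A x'.val y * v y := by rw [Finset.sum_comm]
        _ = 0 := by
            rw [neg_eq_zero]
            refine Finset.sum_eq_zero fun x' _ => ?_
            have := hker1 x'.val x'.prop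
            simpa [Matrix.mulVec, dotProduct] using this
    · exact hker1 x hx
  obtain ⟨y0, hy0⟩ : ∃ y0, w y0 ≠ 0 := by
    by_contra hc
    push_neg at hc
    exact hw0 (funext fun y => hc y)
  have hvne : v y0.val ≠ 0 := by
    simp only [hv]
    rw [dif_neg y0.prop, Subtype.coe_eta]
    exact hy0
  set π : (Fin d → ZMod (p ^ n)) → (Fin d → ZMod (p ^ n₀)) :=
    fun c t => ZMod.castHom (pow_dvd_pow p hn) (ZMod (p ^ n₀)) (c t) with hπ
  set u : (Fin (m + 1)) × (Fin d → ZMod (p ^ n)) → ℚ_[p] :=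
    fun x => v (x.1, π x.2) with hu
  have huker : (towerL p d m W n).mulVec u = 0 := by
    funext x
    have := aux_transfer hfin hn v x.1 x.2
    rw [Pi.zero_apply]
    calc (towerL p d m W n).mulVec u x
        = (towerL p d m W n).mulVec
            (fun z => v (z.1, fun t => ZMod.castHom (pow_dvd_pow p hn)
              (ZMod (p ^ n₀)) (z.2 t))) (x.1, x.2) := by rfl
      _ = A.mulVec v (x.1, fun t => ZMod.castHom (pow_dvd_pow p hn)
            (ZMod (p ^ n₀)) (x.2 t)) := this
      _ = 0 := congrFun hker _
  have hπ0 : π 0 = 0 := by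
    funext t
    simp [hπ]
  have hu00 : u (0, 0) = 0 := by
    rw [hu]
    show v ((0 : Fin (m + 1)), π 0) = 0
    rw [hπ0]
    exact hv00
  haveI : NeZero (p ^ n₀) := ⟨pow_ne_zero _ (Nat.Prime.ne_zero Fact.out)⟩
  obtain ⟨hl, hleq⟩ : ∃ h : Fin d → ZMod (p ^ n), π h = y0.val.2 := by
    refine ⟨fun t => ((y0.val.2 t).val : ZMod (p ^ n)), ?_⟩
    funext t
    rw [hπ]
    show ZMod.castHom (pow_dvd_pow p hn) (ZMod (p ^ n₀)) (((y0.val.2 t).val : ℕ) : ZMod (p ^ n))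
      = y0.val.2 t
    rw [map_natCast]
    exact ZMod.natCast_rightInverse (y0.val.2 t)
  have hune : u (y0.val.1, hl) ≠ 0 := by
    rw [hu]
    show v (y0.val.1, π hl) ≠ 0
    rw [hleq]
    simpa using hvne
  have hne' : ((y0.val.1, hl) : (Fin (m + 1)) × (Fin d → ZMod (p ^ n))) ≠ (0, 0) := by
    intro hc
    exact hune (by rw [hc]; exact hu00)
  rw [towerKappa]
  refine Matrix.exists_mulVec_eq_zero_iff.mp ⟨fun z => u z.val, ?_, ?_⟩
  · intro hc
    exact hune (congrFun hc ⟨(y0.val.1, hl), hne'⟩)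
  · funext x
    have hthis := congrFun huker x.val
    simp only [Matrix.mulVec, dotProduct, Pi.zero_apply,
      Matrix.submatrix_apply] at hthis ⊢
    rw [sum_split (fun y => towerL p d m W n x.val y * u y) (0, 0), hu00, mul_zero,
      zero_add] at hthis
    exact hthis
end
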